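/- Let v, h, ṽ, h̃ be continuous on [0,∞). If ∫_0^t e^{-(t-s)}[v(s) f_1'(0) + c_1 h(s)] ds = ∫_0^t e^{-(t-s)}[ṽ(s) f_1'(0) + c_1 h̃(s)] ds and ∫_0^t e^{-9(t-s)}[v(s) f_3'(0) + c_3 h(s)] ds = ∫_0^t e^{-9(t-s)}[ṽ(s) f_3'(0) + c_3 h̃(s)] ds for all t ≥ 0, then v = ṽ and h = h̃. -/

import Mathlib

/-!
Pulling `e^{-at}` out of `∫₀ᵗ e^{-a(t-s)} A(s) ds` reduces each hypothesis to
`∫₀ᵗ e^{as} (A - Ã)(s) ds = 0` for all `t ≥ 0`; differentiating in `t` gives `A = Ã` pointwise.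
The two resulting pointwise equations form an invertible linear system in `(v - ṽ, h - h̃)`.
-/

open Real

-- Differentiate within `[0, ∞)`, so that the endpoint `t = 0` is covered too.
theorem eq_zero_of_forall_intervalIntegral_eq_zero {F : ℝ → ℝ} (hF : Continuous F)
    (hint : ∀ t : ℝ, 0 ≤ t → ∫ s in (0:ℝ)..t, F s = 0) {t : ℝ} (ht : 0 ≤ t) : F t = 0 := by
  have hderiv : HasDerivWithinAt (fun u => ∫ s in (0:ℝ)..u, F s) (F t) (Set.Ici 0) t :=
    (hF.integral_hasStrictDerivAt 0 t).hasDerivAt.hasDerivWithinAt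
  have hconst : HasDerivWithinAt (fun u => ∫ s in (0:ℝ)..u, F s) 0 (Set.Ici 0) t :=
    (hasDerivWithinAt_const t _ 0).congr (fun u hu => hint u hu) (hint t ht)
  exact (uniqueDiffOn_Ici 0 t ht).eq_deriv _ hderiv hconst

theorem intervalIntegral_exp_mul_sub_mul (a t : ℝ) (A : ℝ → ℝ) :
    ∫ s in (0:ℝ)..t, exp (-(a * (t - s))) * A s
      = exp (-(a * t)) * ∫ s in (0:ℝ)..t, exp (a * s) * A s := by
  rw [← intervalIntegral.integral_const_mul]
  refine intervalIntegral.integral_congr fun s _ => ?_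
  rw [← mul_assoc, ← exp_add]
  ring_nf

theorem eq_of_forall_intervalIntegral_exp_mul_eq (a : ℝ) {A B : ℝ → ℝ}
    (hA : Continuous A) (hB : Continuous B)
    (heq : ∀ t : ℝ, 0 ≤ t →
      ∫ s in (0:ℝ)..t, exp (-(a * (t - s))) * A s = ∫ s in (0:ℝ)..t, exp (-(a * (t - s))) * B s)
    {t : ℝ} (ht : 0 ≤ t) : A t = B t := by
  have hAint : Continuous fun s => exp (a * s) * A s := by fun_prop
  have hBint : Continuous fun s => exp (a * s) * B s := by fun_prop
  have hint : ∀ u : ℝ, 0 ≤ u → ∫ s in (0:ℝ)..u, (exp (a * s) * A s - exp (a * s) * B s) = 0 := by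
    intro u hu
    have h := heq u hu
    rw [intervalIntegral_exp_mul_sub_mul, intervalIntegral_exp_mul_sub_mul] at h
    rw [intervalIntegral.integral_sub (hAint.intervalIntegrable 0 u)
      (hBint.intervalIntegrable 0 u), mul_left_cancel₀ (exp_pos _).ne' h, sub_self]
  have hzero := eq_zero_of_forall_intervalIntegral_eq_zero (by fun_prop) hint ht
  exact mul_left_cancel₀ (exp_pos _).ne' (sub_eq_zero.mp hzero)

theorem stmt_16 (v h v2 h2 : ℝ → ℝ) (hv : Continuous v) (hh : Continuous h)
    (hv2 : Continuous v2) (hh2 : Continuous h2)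
    (heq1 : ∀ t : ℝ, 0 ≤ t →
      (∫ s in (0:ℝ)..t,
          Real.exp (-(t - s)) * (v s * Real.sqrt (2 / π) + 2 * Real.sqrt (2 / π) * h s))
        = ∫ s in (0:ℝ)..t,
            Real.exp (-(t - s)) * (v2 s * Real.sqrt (2 / π) + 2 * Real.sqrt (2 / π) * h2 s))
    (heq3 : ∀ t : ℝ, 0 ≤ t →
      (∫ s in (0:ℝ)..t,
          Real.exp (-9 * (t - s)) *
            (v s * (3 * Real.sqrt (2 / π)) + (2 / 3) * Real.sqrt (2 / π) * h s))
        = ∫ s in (0:ℝ)..t,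
            Real.exp (-9 * (t - s)) *
              (v2 s * (3 * Real.sqrt (2 / π)) + (2 / 3) * Real.sqrt (2 / π) * h2 s)) :
    (∀ t : ℝ, 0 ≤ t → v t = v2 t) ∧ (∀ t : ℝ, 0 ≤ t → h t = h2 t) := by
  set c := sqrt (2 / π)
  have hc : c ≠ 0 := (sqrt_pos.mpr (by positivity)).ne'
  have e1 (t : ℝ) (ht : 0 ≤ t) := eq_of_forall_intervalIntegral_exp_mul_eq 1
    (A := fun s => v s * c + 2 * c * h s) (B := fun s => v2 s * c + 2 * c * h2 s)
    (by fun_prop) (by fun_prop) (by simpa only [one_mul] using heq1) ht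
  have e3 (t : ℝ) (ht : 0 ≤ t) := eq_of_forall_intervalIntegral_exp_mul_eq 9
    (A := fun s => v s * (3 * c) + 2 / 3 * c * h s)
    (B := fun s => v2 s * (3 * c) + 2 / 3 * c * h2 s)
    (by fun_prop) (by fun_prop) (by simpa only [neg_mul] using heq3) ht
  -- the pointwise system has matrix `c • !![1, 2; 3, 2/3]`, of determinant `-16 c² / 3 ≠ 0`
  refine ⟨fun t ht => mul_left_cancel₀ hc ?_, fun t ht => mul_left_cancel₀ hc ?_⟩
  · linear_combination (-1/8 : ℝ) * e1 t ht + (3/8 : ℝ) * e3 t ht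
  · linear_combination (9/16 : ℝ) * e1 t ht - (3/16 : ℝ) * e3 t ht
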